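/- A fresh atomic value (nonce) that does not occur as a subterm of any message in the adversary's knowledge set cannot be derived by the Dolev-Yao adversary. -/

import Mathlib

abbrev Name := ℕ
abbrev Key := ℕ

/-- Symbolic messages: atoms, pairs and (symmetric/asymmetric) encryption. -/
inductive Msg where
  | atom : Name → Msg
  | pair : Msg → Msg → Msg
  | senc : Msg → Msg → Msg
  | aenc : Msg → Key → Msg
  | pk : Key → Msg
  | sk : Key → Msg
deriving DecidableEq

/-- Dolev-Yao deduction relation. -/
inductive Knows : Set Msg → Msg → Prop where
  | mem {S m} : m ∈ S → Knows S m
  | pair_intro {S m n} : Knows S m → Knows S n → Knows S (Msg.pair m n)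
  | fst {S m n} : Knows S (Msg.pair m n) → Knows S m
  | snd {S m n} : Knows S (Msg.pair m n) → Knows S n
  | senc_intro {S m key} : Knows S m → Knows S key → Knows S (Msg.senc m key)
  | sdec {S m key} : Knows S (Msg.senc m key) → Knows S key → Knows S m
  | aenc_intro {S m k} : Knows S m → Knows S (Msg.pk k) → Knows S (Msg.aenc m k)
  | adec {S m k} : Knows S (Msg.aenc m k) → Knows S (Msg.sk k) → Knows S m

/-- Subterm relation on symbolic messages. -/
inductive Subterm : Msg → Msg → Prop where
  | refl (m) : Subterm m m
  | pair_left {m a b} : Subterm m a → Subterm m (Msg.pair a b)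
  | pair_right {m a b} : Subterm m b → Subterm m (Msg.pair a b)
  | senc_msg {m a key} : Subterm m a → Subterm m (Msg.senc a key)
  | senc_key {m a key} : Subterm m key → Subterm m (Msg.senc a key)
  | aenc {m a k} : Subterm m a → Subterm m (Msg.aenc a k)

/-- Introduction rules only create a pair or ciphertext on top of their premises, and that new
subterm is not an atom; elimination rules only expose subterms of a premise. -/
theorem Knows.exists_mem_atom_subterm {S : Set Msg} {m : Msg} {a : Name} (hk : Knows S m)
    (ha : Subterm (Msg.atom a) m) : ∃ x ∈ S, Subterm (Msg.atom a) x := by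
  induction hk with
  | mem hm => exact ⟨_, hm, ha⟩
  | pair_intro _ _ ihm ihn =>
    cases ha with
    | pair_left h => exact ihm h
    | pair_right h => exact ihn h
  | fst _ ih => exact ih ha.pair_left
  | snd _ ih => exact ih ha.pair_right
  | senc_intro _ _ ihm ihkey =>
    cases ha with
    | senc_msg h => exact ihm h
    | senc_key h => exact ihkey h
  | sdec _ _ ih _ => exact ih ha.senc_msg
  | aenc_intro _ _ ih _ =>
    cases ha with
    | aenc h => exact ih h
  | adec _ _ ih _ => exact ih ha.aenc

/-- **Freshness.** A fresh atomic value (nonce) that does not occur as a subterm of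
any message in the adversary's knowledge set cannot be derived by the Dolev-Yao
adversary: the deduction rules cannot introduce new atoms. -/
theorem fresh_atom_underivable (S : Set Msg) (n : Name)
    (hfresh : ∀ x ∈ S, ¬ Subterm (Msg.atom n) x) :
    ¬ Knows S (Msg.atom n) := by
  intro hk
  obtain ⟨x, hx, hsub⟩ := hk.exists_mem_atom_subterm (Subterm.refl _)
  exact hfresh x hx hsub
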